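/- arXiv:2212.05646 — 2 statements merged into one kernel-verified Lean document; each statement's English description precedes it below -/
import Mathlib

section
/- Let H and M be real inner product spaces, κ ∈ (0,1), and N, β > 0. Then there exists a constant C > 0, depending only on N and β, such that for all U₁, U₂, U₃ ∈ H × M, d^{με}_{N,β/2}(U₁, U₃) ≤ C ( d^{με}_{N,β}(U₁, U₂) + d^{με}_{N,β}(U₂, U₃) ). -/
/-!
Write `m(U,V) = min (N‖U - V‖) 1` and `w_β = exp (β Ψ₀)`. Since `m` still satisfies the triangle
inequality, `d_{N,β/2}(U₁,U₃)²` is bounded by `d_{N,β}(U₁,U₂)²` and `d_{N,β}(U₂,U₃)²` up to the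
cross terms `m(U₁,U₂) w_{β/2}(U₃)` and `m(U₂,U₃) w_{β/2}(U₁)`. For the first: if `N‖U₂ - U₃‖ ≥ 1`
then `m(U₂,U₃) = 1` and it is at most `w_β(U₃)`; otherwise `Ψ₀(U₃) ≤ 2 Ψ₀(U₂) + N⁻²`, and halving
`β` absorbs the factor `2`, so `w_{β/2}(U₃) ≤ e^{β/(2N²)} w_β(U₂)`. The second is symmetric.
-/

noncomputable section

variable {H M : Type*} [NormedAddCommGroup H] [InnerProductSpace ℝ H]
  [NormedAddCommGroup M] [InnerProductSpace ℝ M]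

/-- `Ψ₀(u,η) = ½‖u‖² + ½(1-κ)‖η‖²`. -/
def psi0 (κ : ℝ) (U : H × M) : ℝ :=
  (1 / 2) * ‖U.1‖ ^ 2 + (1 / 2) * (1 - κ) * ‖U.2‖ ^ 2

/-- The `ℓ²`-product norm `‖(u,η)‖ = (‖u‖² + ‖η‖²)^{1/2}` on `H × M`. -/
def prodNormL2 (U : H × M) : ℝ := Real.sqrt (‖U.1‖ ^ 2 + ‖U.2‖ ^ 2)

/-- The distance-like function `d^{με}_{N,β}` on `H × M`. -/
def dEps (κ N β : ℝ) (U V : H × M) : ℝ :=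
  Real.sqrt (min (N * prodNormL2 (U - V)) 1 *
    (1 + Real.exp (β * psi0 κ U) + Real.exp (β * psi0 κ V)))

open Real

lemma min_add_one_le_min_one_add_min_one {a b : ℝ} (ha : 0 ≤ a) (hb : 0 ≤ b) :
    min (a + b) 1 ≤ min a 1 + min b 1 := by
  simp only [min_def]
  split_ifs <;> linarith

section TruncatedDist

variable {X : Type*} [PseudoMetricSpace X] {N : ℝ}

lemma min_mul_dist_one_triangle (hN : 0 ≤ N) (x y z : X) :
    min (N * dist x z) 1 ≤ min (N * dist x y) 1 + min (N * dist y z) 1 :=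
  calc min (N * dist x z) 1 ≤ min (N * dist x y + N * dist y z) 1 := by
        gcongr
        rw [← mul_add]
        exact mul_le_mul_of_nonneg_left (dist_triangle x y z) hN
    _ ≤ _ := min_add_one_le_min_one_add_min_one (by positivity) (by positivity)

variable {f g : X → ℝ} {K : ℝ}

lemma min_mul_dist_one_mul_le (hN : 0 ≤ N) (hK : 0 ≤ K) (hg : ∀ x, 0 ≤ g x) (hgf : ∀ x, g x ≤ f x)
    (hloc : ∀ x y, N * dist x y ≤ 1 → g y ≤ K * f x) (x y z : X) :
    min (N * dist x y) 1 * g z ≤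
      min (N * dist y z) 1 * (1 + f y + f z) + K * (min (N * dist x y) 1 * (1 + f x + f y)) := by
  have hf : ∀ x, 0 ≤ f x := fun x => (hg x).trans (hgf x)
  set m₁₂ := min (N * dist x y) 1
  have hm₁₂ : 0 ≤ m₁₂ := le_min (by positivity) zero_le_one
  rcases le_total (N * dist y z) 1 with hclose | hfar
  · have hm₂₃ : 0 ≤ min (N * dist y z) 1 := le_min (by positivity) zero_le_one
    calc m₁₂ * g z ≤ m₁₂ * (K * f y) := mul_le_mul_of_nonneg_left (hloc y z hclose) hm₁₂
      _ ≤ K * (m₁₂ * (1 + f x + f y)) := by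
        nlinarith [mul_nonneg (mul_nonneg hK hm₁₂) (add_nonneg zero_le_one (hf x))]
      _ ≤ _ := le_add_of_nonneg_left (mul_nonneg hm₂₃ (by linarith [hf y, hf z]))
  · have hm₁₂_le : m₁₂ ≤ 1 := min_le_right _ _
    rw [min_eq_right hfar, one_mul]
    calc m₁₂ * g z ≤ f z := by nlinarith [hg z, hgf z]
      _ ≤ 1 + f y + f z := by linarith [hf y]
      _ ≤ _ := le_add_of_nonneg_right (by have := hf x; have := hf y; positivity)

lemma min_mul_dist_one_mul_weight_triangle (hN : 0 ≤ N) (hK : 0 ≤ K) (hg : ∀ x, 0 ≤ g x)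
    (hgf : ∀ x, g x ≤ f x) (hloc : ∀ x y, N * dist x y ≤ 1 → g y ≤ K * f x) (x y z : X) :
    min (N * dist x z) 1 * (1 + g x + g z) ≤
      (2 + K) * (min (N * dist x y) 1 * (1 + f x + f y) +
        min (N * dist y z) 1 * (1 + f y + f z)) := by
  have hf : ∀ x, 0 ≤ f x := fun x => (hg x).trans (hgf x)
  have hm₁₂ : 0 ≤ min (N * dist x y) 1 := le_min (by positivity) zero_le_one
  have hm₂₃ : 0 ≤ min (N * dist y z) 1 := le_min (by positivity) zero_le_one
  have hxz := min_mul_dist_one_mul_le hN hK hg hgf hloc x y z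
  have hzx := min_mul_dist_one_mul_le hN hK hg hgf hloc z y x
  rw [dist_comm z y, dist_comm y x] at hzx
  calc min (N * dist x z) 1 * (1 + g x + g z)
      ≤ (min (N * dist x y) 1 + min (N * dist y z) 1) * (1 + g x + g z) :=
        mul_le_mul_of_nonneg_right (min_mul_dist_one_triangle hN x y z)
          (by linarith [hg x, hg z])
    _ ≤ _ := by nlinarith [hgf x, hgf z, hf y]

end TruncatedDist

lemma sqrt_le_sqrt_mul_add_sqrt {x a b c : ℝ} (ha : 0 ≤ a) (hb : 0 ≤ b) (hc : 0 ≤ c)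
    (h : x ≤ c * (a + b)) : √x ≤ √c * (√a + √b) :=
  calc √x ≤ √(c * (a + b)) := Real.sqrt_le_sqrt h
    _ = √c * √(a + b) := Real.sqrt_mul hc _
    _ ≤ √c * (√a + √b) := by
      gcongr
      refine Real.sqrt_le_iff.mpr ⟨by positivity, ?_⟩
      nlinarith [Real.sq_sqrt ha, Real.sq_sqrt hb,
        mul_nonneg (Real.sqrt_nonneg a) (Real.sqrt_nonneg b)]

lemma sq_norm_le_two_mul_sq_norm_add_sq_norm_sub {E : Type*} [SeminormedAddCommGroup E] (u v : E) :
    ‖v‖ ^ 2 ≤ 2 * (‖u‖ ^ 2 + ‖u - v‖ ^ 2) :=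
  calc ‖v‖ ^ 2 = ‖u - (u - v)‖ ^ 2 := by rw [sub_sub_cancel]
    _ ≤ (‖u‖ + ‖u - v‖) ^ 2 := by gcongr; exact norm_sub_le _ _
    _ ≤ 2 * (‖u‖ ^ 2 + ‖u - v‖ ^ 2) := add_sq_le

section ProdL2

variable {E F : Type*} [NormedAddCommGroup E] [NormedAddCommGroup F] {κ : ℝ}

lemma dist_eq_prodNormL2 (x y : WithLp 2 (E × F)) : dist x y = prodNormL2 (x.ofLp - y.ofLp) := by
  rw [dist_eq_norm, WithLp.prod_norm_eq_of_L2]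
  rfl

lemma sq_prodNormL2 (U : E × F) : prodNormL2 U ^ 2 = ‖U.1‖ ^ 2 + ‖U.2‖ ^ 2 :=
  Real.sq_sqrt (by positivity)

lemma psi0_nonneg (hκ : κ ≤ 1) (U : E × F) : 0 ≤ psi0 κ U := by
  have : 0 ≤ 1 - κ := by linarith
  unfold psi0
  positivity

lemma psi0_le_two_mul_add_sq_prodNormL2 (hκ : κ ∈ Set.Icc 0 1) (U V : E × F) :
    psi0 κ V ≤ 2 * psi0 κ U + prodNormL2 (U - V) ^ 2 := by
  obtain ⟨hκ0, hκ1⟩ := hκ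
  have h₁ := sq_norm_le_two_mul_sq_norm_add_sq_norm_sub U.1 V.1
  have h₂ := sq_norm_le_two_mul_sq_norm_add_sq_norm_sub U.2 V.2
  have hκ' : 0 ≤ 1 - κ := by linarith
  rw [sq_prodNormL2]
  unfold psi0
  simp only [Prod.fst_sub, Prod.snd_sub]
  nlinarith [mul_le_mul_of_nonneg_left h₂ hκ', sq_nonneg ‖U.2 - V.2‖]

lemma exp_half_mul_psi0_le (hκ : κ ∈ Set.Icc 0 1) {β N : ℝ} (hβ : 0 ≤ β) (hN : 0 < N)
    {U V : E × F} (h : N * prodNormL2 (U - V) ≤ 1) :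
    exp (β / 2 * psi0 κ V) ≤ exp (β / (2 * N ^ 2)) * exp (β * psi0 κ U) := by
  rw [← exp_add, exp_le_exp]
  have hUV : prodNormL2 (U - V) ^ 2 ≤ (1 / N) ^ 2 :=
    pow_le_pow_left₀ (by unfold prodNormL2; positivity) ((le_div_iff₀' hN).mpr h) 2
  calc β / 2 * psi0 κ V ≤ β / 2 * (2 * psi0 κ U + (1 / N) ^ 2) := by
        gcongr
        exact (psi0_le_two_mul_add_sq_prodNormL2 hκ U V).trans (by gcongr)
    _ = β / (2 * N ^ 2) + β * psi0 κ U := by field_simp; ring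

end ProdL2

/-- Generalized triangle inequality for `d^{με}_{N,β}`:
there is a constant `C > 0` (depending only on `N` and `β`) with
`d^{με}_{N,β/2}(U₁,U₃) ≤ C (d^{με}_{N,β}(U₁,U₂) + d^{με}_{N,β}(U₂,U₃))`. -/
theorem dEps_triangle (κ : ℝ) (hκ : κ ∈ Set.Ioo (0 : ℝ) 1)
    (N β : ℝ) (hN : 0 < N) (hβ : 0 < β) :
    ∃ C > (0 : ℝ), ∀ U₁ U₂ U₃ : H × M,
      dEps κ N (β / 2) U₁ U₃ ≤ C * (dEps κ N β U₁ U₂ + dEps κ N β U₂ U₃) := by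
  set K := exp (β / (2 * N ^ 2))
  refine ⟨√(2 + K), by positivity, fun U₁ U₂ U₃ => ?_⟩
  have key := min_mul_dist_one_mul_weight_triangle (X := WithLp 2 (H × M)) hN.le (exp_pos _).le
    (f := fun x => exp (β * psi0 κ x.ofLp)) (g := fun x => exp (β / 2 * psi0 κ x.ofLp))
    (fun _ => (exp_pos _).le)
    (fun x => exp_le_exp.mpr <|
      mul_le_mul_of_nonneg_right (half_le_self hβ.le) (psi0_nonneg hκ.2.le x.ofLp))
    (fun x y h => exp_half_mul_psi0_le (Set.Ioo_subset_Icc_self hκ) hβ.le hN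
      (by rwa [dist_eq_prodNormL2] at h))
    (WithLp.toLp 2 U₁) (WithLp.toLp 2 U₂) (WithLp.toLp 2 U₃)
  have := sqrt_le_sqrt_mul_add_sqrt (by positivity) (by positivity) (by positivity) key
  simpa only [dEps, dist_eq_prodNormL2] using this

end
end

section
/- Let δ > 0 and let μ : [0,∞) → (0,∞) be continuously differentiable with μ′(s) + δ μ(s) ≤ 0 for all s ≥ 0, and assume ∫₀^∞ s² μ(s) ds < ∞. For ε > 0 set μ_ε(s) = ε^{−2} μ(s/ε). Then for every ε > 0 and every a ≥ 0, ∫_a^∞ s μ_ε(s) ds ≤ ( (∫₀^∞ s² μ(s) ds) · μ(0)/δ )^{1/2} e^{−δ a/(2ε)}. -/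
open MeasureTheory Set

/- The first moment is invariant under `μ ↦ μ_ε`, so it suffices to treat `ε = 1`. There the
dissipation inequality makes `μ(s) e^{δ s}` antitone, whence `μ(s) ≤ μ(0) e^{-δ s}` and
`∫_b^∞ μ ≤ μ(0) e^{-δ b} / δ`; Cauchy–Schwarz with weight `μ` then bounds the first moment on
`(b, ∞)` by the square root of this times the second moment. -/

theorem sq_integral_mul_le_integral_sq_mul_mul_integral {α : Type*} [MeasurableSpace α]
    {ν : Measure α} {f w : α → ℝ} (hf : AEStronglyMeasurable f ν) (hw : ∀ᵐ x ∂ν, 0 ≤ w x)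
    (hw_int : Integrable w ν) (hf2w_int : Integrable (fun x => f x ^ 2 * w x) ν) :
    (∫ x, f x * w x ∂ν) ^ 2 ≤ (∫ x, f x ^ 2 * w x ∂ν) * ∫ x, w x ∂ν := by
  have hfw_int : Integrable (fun x => f x * w x) ν := by
    refine (hf2w_int.add hw_int).mono' (hf.mul hw_int.1) ?_
    filter_upwards [hw] with x hx
    rw [norm_mul, Real.norm_eq_abs, Real.norm_of_nonneg hx, Pi.add_apply]
    nlinarith [sq_abs (f x), sq_nonneg (|f x| - 1)]
  have hquad : ∀ t : ℝ, 0 ≤ (∫ x, f x ^ 2 * w x ∂ν) * (t * t)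
      + (-2 * ∫ x, f x * w x ∂ν) * t + ∫ x, w x ∂ν := by
    intro t
    have hexpand : (fun x => (t * f x - 1) ^ 2 * w x)
        = fun x => (t * t) * (f x ^ 2 * w x) - (2 * t) * (f x * w x) + w x := by
      ext x; ring
    have hnonneg : 0 ≤ ∫ x, (t * f x - 1) ^ 2 * w x ∂ν :=
      integral_nonneg_of_ae (by filter_upwards [hw] with x hx; positivity)
    rw [hexpand, integral_add ?_ hw_int, integral_sub ?_ ?_, integral_const_mul,
      integral_const_mul] at hnonneg
    · linarith
    · exact hf2w_int.const_mul _
    · exact hfw_int.const_mul _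
    · exact (hf2w_int.const_mul _).sub (hfw_int.const_mul _)
  have hdiscrim := discrim_le_zero hquad
  rw [discrim] at hdiscrim
  linarith

theorem le_mul_exp_neg_of_hasDerivAt_add_mul_nonpos {δ : ℝ} {μ μ' : ℝ → ℝ}
    (hderiv : ∀ s, 0 ≤ s → HasDerivAt μ (μ' s) s)
    (hdiss : ∀ s, 0 ≤ s → μ' s + δ * μ s ≤ 0) {s : ℝ} (hs : 0 ≤ s) :
    μ s ≤ μ 0 * Real.exp (-δ * s) := by
  have hderiv_g : ∀ x, 0 ≤ x → HasDerivAt (fun y => μ y * Real.exp (δ * y))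
      ((μ' x + δ * μ x) * Real.exp (δ * x)) x := by
    intro x hx
    have hexp := ((hasDerivAt_id x).const_mul δ).exp
    exact ((hderiv x hx).mul hexp).congr_deriv (by simp only [id]; ring)
  have hanti : AntitoneOn (fun y => μ y * Real.exp (δ * y)) (Ici 0) := by
    refine antitoneOn_of_hasDerivWithinAt_nonpos (convex_Ici 0)
      (f' := fun x => (μ' x + δ * μ x) * Real.exp (δ * x))
      (fun x hx => (hderiv_g x hx).continuousAt.continuousWithinAt) ?_ ?_
    · intro x hx
      rw [interior_Ici] at hx
      exact (hderiv_g x (le_of_lt hx)).hasDerivWithinAt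
    · intro x hx
      rw [interior_Ici] at hx
      exact mul_nonpos_of_nonpos_of_nonneg (hdiss x (le_of_lt hx)) (Real.exp_pos _).le
  have hmono : μ s * Real.exp (δ * s) ≤ μ 0 := by
    simpa using hanti self_mem_Ici hs hs
  rw [neg_mul, Real.exp_neg, ← div_eq_mul_inv, le_div_iff₀ (Real.exp_pos _)]
  exact hmono

theorem setIntegral_Ioi_le_of_le_mul_exp_neg {f : ℝ → ℝ} {C δ c : ℝ} (hδ : 0 < δ)
    (hf : IntegrableOn f (Ioi c)) (hle : ∀ s, c < s → f s ≤ C * Real.exp (-δ * s)) :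
    ∫ s in Ioi c, f s ≤ C * Real.exp (-δ * c) / δ := by
  have hexp := integrableOn_exp_mul_Ioi (neg_lt_zero.2 hδ) c
  refine (setIntegral_mono_on hf (hexp.const_mul C) measurableSet_Ioi hle).trans_eq ?_
  rw [integral_const_mul, integral_exp_mul_Ioi (neg_lt_zero.2 hδ)]
  field_simp

theorem setIntegral_Ioi_mul_rescale_eq (μ : ℝ → ℝ) {ε : ℝ} (hε : 0 < ε) (a : ℝ) :
    ∫ s in Ioi a, s * ((1 / ε ^ 2) * μ (s / ε)) = ∫ s in Ioi (a / ε), s * μ s := by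
  have hpoint : ∀ s, s * ((1 / ε ^ 2) * μ (s / ε)) = ε⁻¹ * ((s * ε⁻¹) * μ (s * ε⁻¹)) := by
    intro s
    field_simp
  simp_rw [hpoint]
  rw [integral_const_mul, integral_comp_mul_right_Ioi (fun x => x * μ x) a (inv_pos.2 hε),
    smul_eq_mul, inv_inv, ← mul_assoc, inv_mul_cancel₀ hε.ne', one_mul, div_eq_mul_inv]

theorem integral_kernel_firstMoment_tail_le {δ : ℝ} (hδ : 0 < δ) {μ μ' : ℝ → ℝ}
    (hpos : ∀ s, 0 ≤ s → 0 < μ s)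
    (hderiv : ∀ s, 0 ≤ s → HasDerivAt μ (μ' s) s)
    (hdiss : ∀ s, 0 ≤ s → μ' s + δ * μ s ≤ 0)
    (hint : IntegrableOn (fun s => s ^ 2 * μ s) (Ioi 0)) {b : ℝ} (hb : 0 ≤ b) :
    ∫ s in Ioi b, s * μ s ≤
      Real.sqrt ((∫ s in Ioi (0 : ℝ), s ^ 2 * μ s) * μ 0 / δ) * Real.exp (-δ * b / 2) := by
  set M := ∫ s in Ioi (0 : ℝ), s ^ 2 * μ s
  have hdecay : ∀ s, b < s → μ s ≤ μ 0 * Real.exp (-δ * s) := fun s hs =>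
    le_mul_exp_neg_of_hasDerivAt_add_mul_nonpos hderiv hdiss (hb.trans hs.le)
  have hμ_nonneg : ∀ s ∈ Ioi b, 0 ≤ μ s := fun s hs => (hpos s (hb.trans (le_of_lt hs))).le
  have hμ_int : IntegrableOn μ (Ioi b) := by
    have hμ_cont : ContinuousOn μ (Ioi b) := fun s hs =>
      (hderiv s (hb.trans (le_of_lt hs))).continuousAt.continuousWithinAt
    refine ((integrableOn_exp_mul_Ioi (neg_lt_zero.2 hδ) b).const_mul (μ 0)).mono'
      (hμ_cont.aestronglyMeasurable measurableSet_Ioi) ?_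
    filter_upwards [ae_restrict_mem measurableSet_Ioi] with s hs
    rw [Real.norm_of_nonneg (hμ_nonneg s hs)]
    exact hdecay s hs
  have hsecond : ∫ s in Ioi b, s ^ 2 * μ s ≤ M := by
    refine setIntegral_mono_set hint ?_ (Ioi_subset_Ioi hb).eventuallyLE
    filter_upwards [ae_restrict_mem measurableSet_Ioi] with s hs
    exact mul_nonneg (sq_nonneg s) (hpos s (le_of_lt hs)).le
  have hzeroth : ∫ s in Ioi b, μ s ≤ μ 0 * Real.exp (-δ * b) / δ :=
    setIntegral_Ioi_le_of_le_mul_exp_neg hδ hμ_int hdecay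
  have hcs := sq_integral_mul_le_integral_sq_mul_mul_integral (ν := volume.restrict (Ioi b))
    (f := fun s => s) aestronglyMeasurable_id
    (ae_restrict_of_forall_mem measurableSet_Ioi hμ_nonneg) hμ_int
    (hint.mono_set (Ioi_subset_Ioi hb))
  have hM : 0 ≤ M := setIntegral_nonneg measurableSet_Ioi fun s hs =>
    mul_nonneg (sq_nonneg s) (hpos s (le_of_lt hs)).le
  calc ∫ s in Ioi b, s * μ s
      ≤ Real.sqrt ((∫ s in Ioi b, s ^ 2 * μ s) * ∫ s in Ioi b, μ s) :=
        (le_abs_self _).trans (Real.abs_le_sqrt hcs)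
    _ ≤ Real.sqrt (M * (μ 0 * Real.exp (-δ * b) / δ)) :=
        Real.sqrt_le_sqrt (mul_le_mul hsecond hzeroth
          (setIntegral_nonneg measurableSet_Ioi hμ_nonneg) hM)
    _ = Real.sqrt (M * μ 0 / δ) * Real.exp (-δ * b / 2) := by
        rw [← Real.sqrt_sq (Real.exp_pos (-δ * b / 2)).le, ← Real.sqrt_mul
          (div_nonneg (mul_nonneg hM (hpos 0 le_rfl).le) hδ.le), ← Real.exp_nat_mul]
        ring_nf

theorem integral_rescaled_kernel_firstMoment_tail_le_general
    (δ : ℝ) (hδ : 0 < δ) (μ μ' : ℝ → ℝ)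
    (hpos : ∀ s, 0 ≤ s → 0 < μ s)
    (hderiv : ∀ s, 0 ≤ s → HasDerivAt μ (μ' s) s)
    (hdiss : ∀ s, 0 ≤ s → μ' s + δ * μ s ≤ 0)
    (hint : IntegrableOn (fun s => s ^ 2 * μ s) (Set.Ioi 0))
    (ε : ℝ) (hε : 0 < ε) (a : ℝ) (ha : 0 ≤ a) :
    ∫ s in Set.Ioi a, s * ((1 / ε ^ 2) * μ (s / ε)) ≤
      Real.sqrt ((∫ s in Set.Ioi (0 : ℝ), s ^ 2 * μ s) * μ 0 / δ) *
        Real.exp (-δ * a / (2 * ε)) := by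
  rw [setIntegral_Ioi_mul_rescale_eq μ hε a, show -δ * a / (2 * ε) = -δ * (a / ε) / 2 by ring]
  exact integral_kernel_firstMoment_tail_le hδ hpos hderiv hdiss hint (div_nonneg ha hε.le)

/-- First-moment tail bound for the rescaled kernel
`μ_ε(s) = ε⁻² μ(s/ε)`:
`∫_a^∞ s μ_ε(s) ds ≤ ((∫₀^∞ s² μ(s) ds) · μ(0)/δ)^{1/2} e^{-δ a/(2ε)}`. -/
theorem integral_rescaled_kernel_firstMoment_tail_le
    (δ : ℝ) (hδ : 0 < δ) (μ μ' : ℝ → ℝ)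
    (hpos : ∀ s, 0 ≤ s → 0 < μ s)
    (hderiv : ∀ s, 0 ≤ s → HasDerivAt μ (μ' s) s)
    (hcont : ContinuousOn μ' (Set.Ici 0))
    (hdiss : ∀ s, 0 ≤ s → μ' s + δ * μ s ≤ 0)
    (hint : IntegrableOn (fun s => s ^ 2 * μ s) (Set.Ioi 0))
    (ε : ℝ) (hε : 0 < ε) (a : ℝ) (ha : 0 ≤ a) :
    ∫ s in Set.Ioi a, s * ((1 / ε ^ 2) * μ (s / ε)) ≤
      Real.sqrt ((∫ s in Set.Ioi (0 : ℝ), s ^ 2 * μ s) * μ 0 / δ) *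
        Real.exp (-δ * a / (2 * ε)) :=
  integral_rescaled_kernel_firstMoment_tail_le_general δ hδ μ μ' hpos hderiv hdiss hint ε hε a ha
end
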